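/- For every real X ≥ 1, the number of quadruples (x₁,x₂,x₃,x₄) of positive integers with x₁,x₂,x₃,x₄ ≤ X and x₁x₂ = x₃x₄ equals Σ_{1≤a,b≤X, gcd(a,b)=1} ⌊X/max(a,b)⌋². -/

import Mathlib

/-!
For positive integers, `x₁ x₂ = x₃ x₄` says that the pairs `(x₁, x₃)` and `(x₄, x₂)` define the
same fraction, i.e. have the same reduced fraction. Grouping the pairs in `[1, X]²` by their
reduced fraction `a / b`, the class of a coprime pair `(a, b)` is
`{(k a, k b) : 1 ≤ k ≤ ⌊X / max a b⌋}`, and the quadruples are the pairs of elements of a common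
class, whence the sum of squares.
-/

open Finset

theorem Nat.Coprime.exists_eq_mul_of_mul_eq_mul {a b x y : ℕ} (hab : a.Coprime b)
    (h : a * y = b * x) : ∃ k, x = k * a ∧ y = k * b := by
  obtain ⟨k, rfl⟩ : a ∣ x := hab.dvd_of_dvd_mul_left ⟨y, h.symm⟩
  rcases Nat.eq_zero_or_pos a with rfl | ha
  · exact ⟨y, by simp, by simp [(Nat.coprime_zero_left b).mp hab]⟩
  · refine ⟨k, mul_comm a k, Nat.eq_of_mul_eq_mul_left ha ?_⟩
    rw [h]
    ring

theorem Finset.card_filter_product_apply_eq_sum_sq {α β : Type*} [DecidableEq β] {f : α → β}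
    {s : Finset α} {t : Finset β} (H : Set.MapsTo f s t) :
    #{q ∈ s ×ˢ s | f q.1 = f q.2} = ∑ b ∈ t, #{a ∈ s | f a = b} ^ 2 := by
  rw [card_eq_sum_card_fiberwise (f := fun q => f q.1) (t := t)]
  · refine sum_congr rfl fun b _ => ?_
    rw [sq, ← card_product]
    congr 1
    ext ⟨x, y⟩
    simp only [mem_filter, mem_product]
    constructor
    · rintro ⟨⟨⟨hx, hy⟩, hxy⟩, rfl⟩
      exact ⟨⟨hx, rfl⟩, hy, hxy.symm⟩
    · rintro ⟨⟨hx, rfl⟩, hy, hyx⟩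
      exact ⟨⟨⟨hx, hy⟩, hyx.symm⟩, rfl⟩
  · intro q hq
    exact H (mem_product.mp (mem_filter.mp hq).1).1

def reducedFraction (p : ℕ × ℕ) : ℕ × ℕ := (p.1 / p.1.gcd p.2, p.2 / p.1.gcd p.2)

theorem reducedFraction_coprime {p : ℕ × ℕ} (hp : 0 < p.1) :
    (reducedFraction p).1.Coprime (reducedFraction p).2 :=
  Nat.coprime_div_gcd_div_gcd (Nat.gcd_pos_of_pos_left _ hp)

theorem reducedFraction_eq_iff {a b : ℕ} (hab : a.Coprime b) {p : ℕ × ℕ} :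
    reducedFraction p = (a, b) ↔ ∃ k, 0 < k ∧ p = (k * a, k * b) := by
  constructor
  · obtain ⟨x, y⟩ := p
    intro h
    have hg : 0 < x.gcd y := by
      refine Nat.pos_of_ne_zero fun hg => ?_
      simp only [reducedFraction, hg, Nat.div_zero, Prod.mk.injEq] at h
      simp [← h.1, ← h.2] at hab
    simp only [reducedFraction, Prod.mk.injEq] at h
    refine ⟨x.gcd y, hg, ?_⟩
    rw [← h.1, ← h.2, Nat.mul_div_cancel' (Nat.gcd_dvd_left x y),
      Nat.mul_div_cancel' (Nat.gcd_dvd_right x y)]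
  · rintro ⟨k, hk, rfl⟩
    simp [reducedFraction, Nat.gcd_mul_left, hab.gcd_eq_one, hk]

theorem reducedFraction_eq_reducedFraction_iff {x y x' y' : ℕ} (hx : 0 < x) (hx' : 0 < x') :
    reducedFraction (x, y) = reducedFraction (x', y') ↔ x * y' = y * x' := by
  obtain ⟨⟨a, b⟩, hr⟩ : ∃ r, reducedFraction (x, y) = r := ⟨_, rfl⟩
  have hab : a.Coprime b := by simpa [hr] using reducedFraction_coprime (p := (x, y)) hx
  obtain ⟨k, hk, hxy⟩ := (reducedFraction_eq_iff hab).mp hr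
  simp only [Prod.mk.injEq] at hxy
  obtain ⟨rfl, rfl⟩ := hxy
  rw [hr, eq_comm, reducedFraction_eq_iff hab, mul_assoc, mul_assoc, Nat.mul_right_inj hk.ne']
  constructor
  · rintro ⟨l, -, h⟩
    simp only [Prod.mk.injEq] at h
    rw [h.1, h.2]
    ring
  · intro h
    obtain ⟨l, rfl, rfl⟩ := hab.exists_eq_mul_of_mul_eq_mul h
    exact ⟨l, Nat.pos_of_mul_pos_right hx', rfl⟩

theorem card_filter_reducedFraction_eq {a b : ℕ} (N : ℕ) (hab : a.Coprime b) (ha : 0 < a)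
    (hb : 0 < b) :
    #{p ∈ Icc 1 N ×ˢ Icc 1 N | reducedFraction p = (a, b)} = N / max a b := by
  have hfiber : {p ∈ Icc 1 N ×ˢ Icc 1 N | reducedFraction p = (a, b)} =
      (Icc 1 (N / max a b)).image fun k => (k * a, k * b) := by
    ext p
    simp only [mem_filter, mem_product, mem_Icc, mem_image, reducedFraction_eq_iff hab,
      Nat.le_div_iff_mul_le (lt_max_of_lt_left ha), ← Nat.mul_max_mul_left, max_le_iff]
    constructor
    · rintro ⟨⟨⟨-, hka⟩, -, hkb⟩, k, hk, rfl⟩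
      exact ⟨k, ⟨hk, hka, hkb⟩, rfl⟩
    · rintro ⟨k, ⟨hk, hka, hkb⟩, rfl⟩
      exact ⟨⟨⟨Nat.mul_pos hk ha, hka⟩, Nat.mul_pos hk hb, hkb⟩, k, hk, rfl⟩
  rw [hfiber, card_image_of_injective _ fun k l h => ?_, Nat.card_Icc, Nat.add_sub_cancel]
  simpa [ha.ne'] using congrArg Prod.fst h

theorem mapsTo_reducedFraction (N : ℕ) :
    Set.MapsTo reducedFraction (Icc 1 N ×ˢ Icc 1 N : Finset (ℕ × ℕ))
      (({r ∈ Icc 1 N ×ˢ Icc 1 N | r.1.gcd r.2 = 1} : Finset (ℕ × ℕ)) : Set (ℕ × ℕ)) := by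
  rintro ⟨x, y⟩ h
  simp only [coe_product, coe_Icc, Set.mem_prod, Set.mem_Icc] at h
  have hg := Nat.gcd_pos_of_pos_left y h.1.1
  simp only [coe_filter, mem_product, mem_Icc, Set.mem_ofPred_eq]
  refine ⟨⟨⟨Nat.div_pos (Nat.gcd_le_left y h.1.1) hg, (Nat.div_le_self _ _).trans h.1.2⟩,
    Nat.div_pos (Nat.gcd_le_right (m := x) (n := y) h.2.1) hg, (Nat.div_le_self _ _).trans h.2.2⟩,
    reducedFraction_coprime (p := (x, y)) h.1.1⟩

theorem card_filter_reducedFraction_eq_reducedFraction (N : ℕ) :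
    #{q ∈ (Icc 1 N ×ˢ Icc 1 N) ×ˢ (Icc 1 N ×ˢ Icc 1 N) |
        reducedFraction q.1 = reducedFraction q.2} =
      ∑ a ∈ Icc 1 N, ∑ b ∈ Icc 1 N, if a.gcd b = 1 then (N / max a b) ^ 2 else 0 := by
  rw [card_filter_product_apply_eq_sum_sq (mapsTo_reducedFraction N), sum_filter, sum_product]
  refine sum_congr rfl fun a ha => sum_congr rfl fun b hb => ?_
  split_ifs with hab
  · rw [card_filter_reducedFraction_eq N hab (mem_Icc.mp ha).1 (mem_Icc.mp hb).1]
  · rfl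

theorem natCast_pos_and_le_iff_mem_Icc {X : ℝ} {n : ℕ} :
    (0 < (n : ℤ) ∧ ((n : ℤ) : ℝ) ≤ X) ↔ n ∈ Icc 1 ⌊X⌋₊ := by
  rw [mem_Icc, Int.cast_natCast, Nat.cast_pos]
  exact and_congr_right fun hn => (Nat.le_floor_iff' hn.ne').symm

theorem card_int_quadruples (X : ℝ) :
    Nat.card {p : ℤ × ℤ × ℤ × ℤ //
      0 < p.1 ∧ 0 < p.2.1 ∧ 0 < p.2.2.1 ∧ 0 < p.2.2.2 ∧
      (p.1 : ℝ) ≤ X ∧ (p.2.1 : ℝ) ≤ X ∧ (p.2.2.1 : ℝ) ≤ X ∧ (p.2.2.2 : ℝ) ≤ X ∧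
      p.1 * p.2.1 = p.2.2.1 * p.2.2.2} =
    #{q ∈ (Icc 1 ⌊X⌋₊ ×ˢ Icc 1 ⌊X⌋₊) ×ˢ (Icc 1 ⌊X⌋₊ ×ˢ Icc 1 ⌊X⌋₊) |
      q.1.1 * q.2.2 = q.1.2 * q.2.1} := by
  set S := {q ∈ (Icc 1 ⌊X⌋₊ ×ˢ Icc 1 ⌊X⌋₊) ×ˢ (Icc 1 ⌊X⌋₊ ×ˢ Icc 1 ⌊X⌋₊) |
      q.1.1 * q.2.2 = q.1.2 * q.2.1}
  let toQuadruple : (ℕ × ℕ) × (ℕ × ℕ) → ℤ × ℤ × ℤ × ℤ := fun q => (q.1.1, q.2.2, q.1.2, q.2.1)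
  have hinj : Function.Injective toQuadruple := by
    rintro ⟨⟨⟩, ⟨⟩⟩ ⟨⟨⟩, ⟨⟩⟩ h
    simp only [toQuadruple, Prod.mk.injEq, Nat.cast_inj] at h
    obtain ⟨rfl, rfl, rfl, rfl⟩ := h
    rfl
  have himage : {p : ℤ × ℤ × ℤ × ℤ |
      0 < p.1 ∧ 0 < p.2.1 ∧ 0 < p.2.2.1 ∧ 0 < p.2.2.2 ∧
      (p.1 : ℝ) ≤ X ∧ (p.2.1 : ℝ) ≤ X ∧ (p.2.2.1 : ℝ) ≤ X ∧ (p.2.2.2 : ℝ) ≤ X ∧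
      p.1 * p.2.1 = p.2.2.1 * p.2.2.2} = toQuadruple '' S := by
    ext ⟨x₁, x₂, x₃, x₄⟩
    constructor
    · rintro ⟨h₁, h₂, h₃, h₄, hX₁, hX₂, hX₃, hX₄, heq⟩
      lift x₁ to ℕ using h₁.le
      lift x₂ to ℕ using h₂.le
      lift x₃ to ℕ using h₃.le
      lift x₄ to ℕ using h₄.le
      refine ⟨((x₁, x₃), (x₄, x₂)), ?_, rfl⟩
      simp only [S, coe_filter, mem_product, ← natCast_pos_and_le_iff_mem_Icc]
      exact ⟨⟨⟨⟨h₁, hX₁⟩, h₃, hX₃⟩, ⟨h₄, hX₄⟩, h₂, hX₂⟩, by dsimp only at heq ⊢; exact_mod_cast heq⟩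
    · rintro ⟨⟨⟨n₁, n₃⟩, n₄, n₂⟩, hq, hp⟩
      simp only [toQuadruple, Prod.mk.injEq] at hp
      obtain ⟨rfl, rfl, rfl, rfl⟩ := hp
      simp only [S, coe_filter, mem_product, ← natCast_pos_and_le_iff_mem_Icc] at hq
      obtain ⟨⟨⟨⟨h₁, hX₁⟩, h₃, hX₃⟩, ⟨h₄, hX₄⟩, h₂, hX₂⟩, heq⟩ := hq
      exact ⟨h₁, h₂, h₃, h₄, hX₁, hX₂, hX₃, hX₄, by dsimp only at heq ⊢; exact_mod_cast heq⟩
  exact (congrArg (fun s : Set _ => Nat.card s) himage).trans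
    ((Nat.card_image_of_injective hinj _).trans (Nat.card_eq_finsetCard S))

theorem card_filter_mul_eq_mul (N : ℕ) :
    #{q ∈ (Icc 1 N ×ˢ Icc 1 N) ×ˢ (Icc 1 N ×ˢ Icc 1 N) | q.1.1 * q.2.2 = q.1.2 * q.2.1} =
      ∑ a ∈ Icc 1 N, ∑ b ∈ Icc 1 N, if a.gcd b = 1 then (N / max a b) ^ 2 else 0 := by
  rw [← card_filter_reducedFraction_eq_reducedFraction]
  congr 1
  refine filter_congr fun q hq => ?_
  simp only [mem_product, mem_Icc] at hq
  exact (reducedFraction_eq_reducedFraction_iff hq.1.1.1 hq.2.1.1).symm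

theorem multiplicative_quadruple_count_general (X : ℝ) :
    (Nat.card {p : ℤ × ℤ × ℤ × ℤ //
      0 < p.1 ∧ 0 < p.2.1 ∧ 0 < p.2.2.1 ∧ 0 < p.2.2.2 ∧
      (p.1 : ℝ) ≤ X ∧ (p.2.1 : ℝ) ≤ X ∧ (p.2.2.1 : ℝ) ≤ X ∧ (p.2.2.2 : ℝ) ≤ X ∧
      p.1 * p.2.1 = p.2.2.1 * p.2.2.2}) =
    ∑ a ∈ Finset.Icc 1 ⌊X⌋₊, ∑ b ∈ Finset.Icc 1 ⌊X⌋₊,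
      if Nat.gcd a b = 1 then (⌊X / (max a b : ℕ)⌋₊) ^ 2 else 0 := by
  rw [card_int_quadruples, card_filter_mul_eq_mul]
  simp only [Nat.floor_div_natCast]

theorem multiplicative_quadruple_count (X : ℝ) (hX : 1 ≤ X) :
    (Nat.card {p : ℤ × ℤ × ℤ × ℤ //
      0 < p.1 ∧ 0 < p.2.1 ∧ 0 < p.2.2.1 ∧ 0 < p.2.2.2 ∧
      (p.1 : ℝ) ≤ X ∧ (p.2.1 : ℝ) ≤ X ∧ (p.2.2.1 : ℝ) ≤ X ∧ (p.2.2.2 : ℝ) ≤ X ∧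
      p.1 * p.2.1 = p.2.2.1 * p.2.2.2}) =
    ∑ a ∈ Finset.Icc 1 ⌊X⌋₊, ∑ b ∈ Finset.Icc 1 ⌊X⌋₊,
      if Nat.gcd a b = 1 then (⌊X / (max a b : ℕ)⌋₊) ^ 2 else 0 :=
  multiplicative_quadruple_count_general X
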